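/- arXiv:2101.05857 — 3 statements merged into one kernel-verified Lean document; each statement's English description precedes it below -/
import Mathlib

section
/- Let f, g ∈ Γ₀(X) and x, y ∈ X. If the infimal convolution is exact at x via y, i.e. (f □ g)(x) = f(y) + g(x − y), then ∂(f □ g)(x) = ∂f(y) ∩ ∂g(x − y). -/
open scoped RealInnerProductSpace

variable {X : Type*} [NormedAddCommGroup X] [InnerProductSpace ℝ X] [CompleteSpace X]

/-- The convex subdifferential of an extended-real-valued function. -/
def SubdiffAt (f : X → EReal) (x : X) : Set X :=
  {u | ∀ y, f x + ((⟪u, y - x⟫ : ℝ) : EReal) ≤ f y}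

/-- A proper function: never `⊥` and not identically `⊤`. -/
def ProperE (f : X → EReal) : Prop := (∀ x, f x ≠ ⊥) ∧ ∃ x, f x ≠ ⊤

/-- Convexity for extended-real-valued functions. -/
def EConvex (f : X → EReal) : Prop :=
  ∀ x y : X, ∀ a b : ℝ, 0 ≤ a → 0 ≤ b → a + b = 1 →
    f (a • x + b • y) ≤ (a : EReal) * f x + (b : EReal) * f y

/-- Membership in `Γ₀(X)`: proper, lower semicontinuous, convex. -/
def Gamma0 (f : X → EReal) : Prop := ProperE f ∧ LowerSemicontinuous f ∧ EConvex f

/-- The infimal convolution of `f` and `g`. -/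
noncomputable def infConv (f g : X → EReal) : X → EReal := fun x => ⨅ y, f y + g (x - y)

/-- If `(f □ g)(x) = f(y) + g(x − y)`, then `∂(f □ g)(x) = ∂f(y) ∩ ∂g(x − y)`. -/
theorem stmt_3 (f g : X → EReal) (hf : Gamma0 f) (hg : Gamma0 g) (x y : X)
    (h : infConv f g x = f y + g (x - y)) :
    SubdiffAt (infConv f g) x = SubdiffAt f y ∩ SubdiffAt g (x - y) := by
  obtain ⟨hfb, w0, hw0⟩ := hf.1
  obtain ⟨hgb, v0, hv0⟩ := hg.1
  have key : ∀ z w : X, infConv f g z ≤ f w + g (z - w) := fun z w => iInf_le _ w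
  by_cases htop : f y + g (x - y) = ⊤
  · -- both sides are empty
    have hLHS : SubdiffAt (infConv f g) x = ∅ := by
      ext u
      simp only [Set.mem_empty_iff_false, iff_false, SubdiffAt, Set.mem_setOf_eq, not_forall]
      refine ⟨w0 + v0, ?_⟩
      intro h1
      rw [h, htop, EReal.top_add_coe] at h1
      have h2 : infConv f g (w0 + v0) ≤ f w0 + g v0 := by
        have := key (w0 + v0) w0
        rwa [show w0 + v0 - w0 = v0 from by abel] at this
      have h3 : f w0 + g v0 = ⊤ := top_le_iff.mp (h1.trans h2)
      rw [← EReal.coe_toReal hw0 (hfb w0), ← EReal.coe_toReal hv0 (hgb v0),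
        ← EReal.coe_add] at h3
      exact EReal.coe_ne_top _ h3
    have hRHS : SubdiffAt f y ∩ SubdiffAt g (x - y) = ∅ := by
      by_cases hfy : f y = ⊤
      · ext u
        simp only [Set.mem_inter_iff, Set.mem_empty_iff_false, iff_false, SubdiffAt,
          Set.mem_setOf_eq, not_and, not_forall]
        intro hu
        have := hu w0
        rw [hfy, EReal.top_add_coe] at this
        exact (hw0 (top_le_iff.mp this)).elim
      · have hgxy : g (x - y) = ⊤ := by
          by_contra hgt
          rw [← EReal.coe_toReal hfy (hfb y), ← EReal.coe_toReal hgt (hgb _),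
            ← EReal.coe_add] at htop
          exact EReal.coe_ne_top _ htop
        ext u
        simp only [Set.mem_inter_iff, Set.mem_empty_iff_false, iff_false, SubdiffAt,
          Set.mem_setOf_eq, not_and, not_forall]
        intro _
        refine ⟨v0, ?_⟩
        intro hle
        rw [hgxy, EReal.top_add_coe] at hle
        exact hv0 (top_le_iff.mp hle)
    rw [hLHS, hRHS]
  · -- finite case
    have hfy : f y ≠ ⊤ := by
      intro e; exact htop (by rw [e]; exact EReal.top_add_of_ne_bot (hgb _))
    have hgxy : g (x - y) ≠ ⊤ := by
      intro e; exact htop (by rw [e, EReal.add_top_iff_ne_bot]; exact hfb y)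
    have hfc : ((f y).toReal : EReal) = f y := EReal.coe_toReal hfy (hfb y)
    have hgc : ((g (x - y)).toReal : EReal) = g (x - y) := EReal.coe_toReal hgxy (hgb _)
    ext u
    simp only [Set.mem_inter_iff, SubdiffAt, Set.mem_setOf_eq]
    constructor
    · intro hu
      constructor
      · intro w
        have h1 := hu (w + (x - y))
        rw [show w + (x - y) - x = w - y from by abel] at h1
        have h2 : infConv f g (w + (x - y)) ≤ f w + g (x - y) := by
          have := key (w + (x - y)) w
          rwa [show w + (x - y) - w = x - y from by abel] at this
        have h3 : f y + g (x - y) + ((⟪u, w - y⟫ : ℝ) : EReal) ≤ f w + g (x - y) := by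
          rw [← h]; exact h1.trans h2
        rw [add_right_comm, ← hgc] at h3
        rw [← hgc] at h3
        exact (EReal.addLECancellable_coe _).add_le_add_iff_right.mp h3
      · intro w
        have h1 := hu (y + w)
        rw [show y + w - x = w - (x - y) from by abel] at h1
        have h2 : infConv f g (y + w) ≤ f y + g w := by
          have := key (y + w) y
          rwa [show y + w - y = w from by abel] at this
        have h3 : f y + g (x - y) + ((⟪u, w - (x - y)⟫ : ℝ) : EReal) ≤ f y + g w := by
          rw [← h]; exact h1.trans h2
        have h4 : g (x - y) + ((⟪u, w - (x - y)⟫ : ℝ) : EReal) + f y ≤ g w + f y := by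
          calc g (x - y) + ((⟪u, w - (x - y)⟫ : ℝ) : EReal) + f y
              = f y + g (x - y) + ((⟪u, w - (x - y)⟫ : ℝ) : EReal) := by
                rw [add_right_comm, add_comm (g (x - y)) (f y)]
            _ ≤ f y + g w := h3
            _ = g w + f y := add_comm _ _
        rw [← hfc] at h4
        exact (EReal.addLECancellable_coe _).add_le_add_iff_right.mp h4
    · rintro ⟨hu1, hu2⟩
      intro z
      rw [h]
      refine le_iInf fun w => ?_
      have A := hu1 w
      have B := hu2 (z - w)
      have C := add_le_add A B
      calc f y + g (x - y) + ((⟪u, z - x⟫ : ℝ) : EReal)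
          = (f y + ((⟪u, w - y⟫ : ℝ) : EReal)) + (g (x - y) + ((⟪u, z - w - (x - y)⟫ : ℝ) : EReal)) := by
            rw [add_add_add_comm, ← EReal.coe_add]
            congr 2
            rw [← inner_add_right]
            congr 1
            abel
        _ ≤ f w + g (z - w) := C
end

section
/- Let f, g ∈ Γ₀(X) and x, y ∈ X. If ∂f(y) ∩ ∂g(x − y) ≠ ∅, then (f □ g)(x) = f(y) + g(x − y) and ∂(f □ g)(x) = ∂f(y) ∩ ∂g(x − y). -/
open scoped RealInnerProductSpace

variable {X : Type*} [NormedAddCommGroup X] [InnerProductSpace ℝ X] [CompleteSpace X]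

/-
Adding the subgradient inequalities of a common subgradient `u ∈ ∂f(y) ∩ ∂g(x − y)` gives the
affine minorant `f y + g (x − y) + ⟪u, · − x⟫` of `f □ g`; it touches `f □ g` at `x`, which gives
exactness and `⊇`. Conversely, `(f □ g)(z + (x − y)) ≤ f z + g (x − y)` turns a subgradient of
`f □ g` at `x` into one of `f` at `y` once the finite value `g (x − y)` is cancelled, and
symmetrically for `g`.
-/

section

variable {E : Type*} [NormedAddCommGroup E]

theorem infConv_comm (f g : E → EReal) : infConv f g = infConv g f := by
  funext x
  refine (Equiv.subLeft x).iInf_comp.symm.trans ?_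
  simp only [infConv, Equiv.subLeft_apply, sub_sub_cancel, add_comm]

variable [InnerProductSpace ℝ E]

theorem ne_top_of_mem_subdiffAt {f : E → EReal} (hf : ∃ z, f z ≠ ⊤) {x u : E}
    (hu : u ∈ SubdiffAt f x) : f x ≠ ⊤ := by
  intro htop
  obtain ⟨z, hz⟩ := hf
  have := hu z
  rw [htop, EReal.top_add_coe, top_le_iff] at this
  exact hz this

theorem add_add_inner_le_infConv {f g : E → EReal} {x y u : E} (huf : u ∈ SubdiffAt f y)
    (hug : u ∈ SubdiffAt g (x - y)) (z : E) :
    f y + g (x - y) + ((⟪u, z - x⟫ : ℝ) : EReal) ≤ infConv f g z := by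
  refine le_iInf fun w => ?_
  have hinner : ⟪u, w - y⟫ + ⟪u, z - w - (x - y)⟫ = ⟪u, z - x⟫ := by
    rw [← inner_add_right]
    congr 1
    abel
  calc f y + g (x - y) + ((⟪u, z - x⟫ : ℝ) : EReal)
      = (f y + ((⟪u, w - y⟫ : ℝ) : EReal)) + (g (x - y) + ((⟪u, z - w - (x - y)⟫ : ℝ) : EReal)) := by
        rw [add_add_add_comm, ← EReal.coe_add, hinner]
    _ ≤ f w + g (z - w) := add_le_add (huf w) (hug (z - w))

theorem infConv_eq_add_of_mem_subdiffAt {f g : E → EReal} {x y u : E}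
    (huf : u ∈ SubdiffAt f y) (hug : u ∈ SubdiffAt g (x - y)) :
    infConv f g x = f y + g (x - y) :=
  le_antisymm (iInf_le _ y) <| by
    simpa using add_add_inner_le_infConv huf hug x

theorem mem_subdiffAt_infConv {f g : E → EReal} {x y u : E}
    (huf : u ∈ SubdiffAt f y) (hug : u ∈ SubdiffAt g (x - y)) :
    u ∈ SubdiffAt (infConv f g) x := fun z => by
  rw [infConv_eq_add_of_mem_subdiffAt huf hug]
  exact add_add_inner_le_infConv huf hug z

theorem subdiffAt_infConv_subset_left {f g : E → EReal} {x y : E}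
    (hexact : infConv f g x = f y + g (x - y)) (hbot : g (x - y) ≠ ⊥) (htop : g (x - y) ≠ ⊤) :
    SubdiffAt (infConv f g) x ⊆ SubdiffAt f y := by
  intro v hv z
  lift g (x - y) to ℝ using ⟨htop, hbot⟩ with c hc
  have hshift : infConv f g (z + (x - y)) ≤ f z + c :=
    (iInf_le _ z).trans_eq (by rw [add_sub_cancel_left, hc])
  have hinner : z + (x - y) - x = z - y := by abel
  have := (hv (z + (x - y))).trans hshift
  rw [hexact, hinner, add_right_comm] at this
  exact (EReal.addLECancellable_coe c).add_le_add_iff_right.mp this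

theorem subdiffAt_infConv_subset_right {f g : E → EReal} {x y : E}
    (hexact : infConv f g x = f y + g (x - y)) (hbot : f y ≠ ⊥) (htop : f y ≠ ⊤) :
    SubdiffAt (infConv f g) x ⊆ SubdiffAt g (x - y) := by
  have hexact' : infConv g f x = g (x - y) + f (x - (x - y)) := by
    rw [← infConv_comm, sub_sub_cancel, add_comm, hexact]
  rw [infConv_comm]
  exact subdiffAt_infConv_subset_left hexact' (by rwa [sub_sub_cancel]) (by rwa [sub_sub_cancel])

end

/-- If `∂f(y) ∩ ∂g(x − y) ≠ ∅`, then the infimal convolution is exact at `x` via `y` and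
`∂(f □ g)(x) = ∂f(y) ∩ ∂g(x − y)`. -/
theorem stmt_4 (f g : X → EReal) (hf : Gamma0 f) (hg : Gamma0 g) (x y : X)
    (h : (SubdiffAt f y ∩ SubdiffAt g (x - y)).Nonempty) :
    infConv f g x = f y + g (x - y) ∧
      SubdiffAt (infConv f g) x = SubdiffAt f y ∩ SubdiffAt g (x - y) := by
  obtain ⟨u, huf, hug⟩ := h
  have hexact := infConv_eq_add_of_mem_subdiffAt huf hug
  refine ⟨hexact, Set.Subset.antisymm (Set.subset_inter ?_ ?_) fun v hv => ?_⟩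
  · exact subdiffAt_infConv_subset_left hexact (hg.1.1 _) (ne_top_of_mem_subdiffAt hg.1.2 hug)
  · exact subdiffAt_infConv_subset_right hexact (hf.1.1 _) (ne_top_of_mem_subdiffAt hf.1.2 huf)
  · exact mem_subdiffAt_infConv hv.1 hv.2
end

section
/- The operator T = (1/(2m)) Σ_{k=1}^{m−1} (m − 2k) R^k on X^m, where R is the circular right shift, is skew: ⟨Tx, x⟩ = 0 for all x ∈ X^m. -/
open scoped RealInnerProductSpace

variable {X : Type*} [NormedAddCommGroup X] [InnerProductSpace ℝ X] [CompleteSpace X]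
variable {m : ℕ} [NeZero m]

/-- The circular right shift `(x₁,…,x_m) ↦ (x_m, x₁,…,x_{m−1})` on `X^m`. -/
def shiftR : PiLp 2 (fun _ : Fin m => X) → PiLp 2 (fun _ : Fin m => X) :=
  fun x => WithLp.toLp 2 (fun j => x (j - 1))

/-- The operator `T = (1/(2m)) Σ_{k=1}^{m−1} (m − 2k) R^k`. -/
noncomputable def Tskew : PiLp 2 (fun _ : Fin m => X) → PiLp 2 (fun _ : Fin m => X) :=
  fun x => (1 / (2 * (m : ℝ))) •
    ∑ k ∈ Finset.Ico 1 m, (((m : ℝ) - 2 * (k : ℝ)) • (shiftR^[k] x))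

/-! `R` is orthogonal with `R^m = 1`, so `⟨R^(m-k) x, x⟩ = ⟨x, R^k x⟩ = ⟨R^k x, x⟩`.
The coefficients `m - 2k` are antisymmetric under the reflection `k ↦ m - k` of `{1, …, m-1}`,
so the sum `⟨Tx, x⟩ = (1/(2m)) Σ (m - 2k) ⟨R^k x, x⟩` cancels in pairs. -/

open Finset Fin.NatCast Fin.CommRing

theorem Finset.sum_Ico_sub_two_mul_mul_eq_zero (n : ℕ) (a : ℕ → ℝ)
    (ha : ∀ k ∈ Ico 1 n, a (n - k) = a k) :
    ∑ k ∈ Ico 1 n, ((n : ℝ) - 2 * k) * a k = 0 := by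
  have reflect : ∑ k ∈ Ico 1 n, ((n : ℝ) - 2 * k) * a k
      = ∑ k ∈ Ico 1 n, ((n : ℝ) - 2 * (n - k : ℕ)) * a (n - k) := by
    refine sum_nbij' (n - ·) (n - ·) ?_ ?_ ?_ ?_ ?_ <;> intro k hk <;> simp only [mem_Ico] at hk ⊢
    iterate 4 omega
    rw [Nat.sub_sub_self hk.2.le]
  have antisymm : ∑ k ∈ Ico 1 n, ((n : ℝ) - 2 * (n - k : ℕ)) * a (n - k)
      = -∑ k ∈ Ico 1 n, ((n : ℝ) - 2 * k) * a k := by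
    rw [← sum_neg_distrib]
    refine sum_congr rfl fun k hk => ?_
    rw [ha k hk, Nat.cast_sub (mem_Ico.1 hk).2.le]
    ring
  linarith

theorem shiftR_iterate_apply {Y : Type*} (x : PiLp 2 (fun _ : Fin m => Y)) (k : ℕ) (j : Fin m) :
    shiftR^[k] x j = x (j - k) := by
  induction k generalizing j with
  | zero => simp
  | succ n ih =>
    rw [Function.iterate_succ_apply', shiftR, PiLp.toLp_apply, ih, Nat.cast_succ, sub_sub, add_comm]

theorem inner_shiftR_iterate_sub {Y : Type*} [NormedAddCommGroup Y] [InnerProductSpace ℝ Y]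
    (x : PiLp 2 (fun _ : Fin m => Y)) {k : ℕ} (hk : k ≤ m) :
    ⟪shiftR^[m - k] x, x⟫ = ⟪shiftR^[k] x, x⟫ := by
  simp only [PiLp.inner_apply, shiftR_iterate_apply, Nat.cast_sub hk, Fin.natCast_self, zero_sub,
    sub_neg_eq_add]
  rw [← (Equiv.subRight (k : Fin m)).sum_comp]
  simp only [Equiv.subRight_apply, sub_add_cancel]
  exact sum_congr rfl fun j _ => real_inner_comm _ _

/-- `T` is skew: `⟨Tx, x⟩ = 0` for all `x`. -/
theorem stmt_13 (x : PiLp 2 (fun _ : Fin m => X)) :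
    (⟪Tskew x, x⟫ : ℝ) = 0 := by
  simp only [Tskew, real_inner_smul_left, sum_inner]
  rw [sum_Ico_sub_two_mul_mul_eq_zero m _ fun k hk => inner_shiftR_iterate_sub x (mem_Ico.1 hk).2.le,
    mul_zero]
end
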